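/- Let w be a right-infinite word over a finite alphabet. For every n ≥ 0, dim(W_{n+1}) ≥ dim(V_n) − 1, where V_n is the span of length-n factors in the factor algebra over ℚ and W_{n+1} is the span of commutators ab − ba with a, b ∈ Fac(w), |a| + |b| = n+1. -/

import Mathlib

variable {α : Type*}

/-- `u` occurs in the infinite word `w` at position `i`. -/
def FactorAt (w : ℕ → α) (i : ℕ) (u : List α) : Prop :=
  u = (List.range u.length).map fun k => w (i + k)

/-- The set of (finite) factors of the right-infinite word `w`. -/
def Fac (w : ℕ → α) : Set (List α) := {u | ∃ i, FactorAt w i u}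

/-- The relation defining the factor algebra: words that are not factors of `w`
are set to zero in the monoid algebra `ℚ⟨Σ*⟩`. -/
def FacAlgRel (w : ℕ → α) :
    MonoidAlgebra ℚ (FreeMonoid α) → MonoidAlgebra ℚ (FreeMonoid α) → Prop :=
  fun x y => ∃ u : FreeMonoid α, FreeMonoid.toList u ∉ Fac w ∧
    x = MonoidAlgebra.of ℚ (FreeMonoid α) u ∧ y = 0

/-- The factor algebra `A_w` of `w` over `ℚ`. -/
abbrev FacAlg (w : ℕ → α) := RingQuot (FacAlgRel w)

/-- The image in the factor algebra of a word `u`. -/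
noncomputable def facCls (w : ℕ → α) (u : List α) : FacAlg w :=
  RingQuot.mkAlgHom ℚ (FacAlgRel w) (MonoidAlgebra.of ℚ (FreeMonoid α) (FreeMonoid.ofList u))

/-- `V_n`: the span of the images of length-`n` factors of `w`. -/
noncomputable def Vspace (w : ℕ → α) (n : ℕ) : Submodule ℚ (FacAlg w) :=
  Submodule.span ℚ {x | ∃ u ∈ Fac w, u.length = n ∧ x = facCls w u}

/-- `W_n`: the span of commutators `ab - ba` with `a, b` factors of `w` and `|a|+|b| = n`. -/
noncomputable def Wspace (w : ℕ → α) (n : ℕ) : Submodule ℚ (FacAlg w) :=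
  Submodule.span ℚ {x | ∃ a ∈ Fac w, ∃ b ∈ Fac w, a.length + b.length = n ∧
    x = facCls w a * facCls w b - facCls w b * facCls w a}

/-!
Let `u ≠ w[0, n)` be a factor of length `n`, first occurring at position `j ≥ 1`, and put
`A = w[j-1, j-1+n)` and `y = w(j-1+n)`, so that `A y = w(j-1) u` is a factor. Let `φ_v` be the
linear form on `A_w` that is `1` on the factors of the form `a v` and `0` on all other words.
If `v` first occurs after position `j - 1` then `A ≠ v`, so `φ_v (A y - y A) = φ_v (w(j-1) u)`,
which is `1` for `v = u` and `0` otherwise. Ordering the `u` by first occurrence, the matrix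
`φ_v (A_u y_u - y_u A_u)` is triangular with unit diagonal, so these commutators, one for each
length-`n` factor but the prefix, are linearly independent in `W_{n+1}`, while the length-`n`
factors span `V_n`.
-/

namespace RingQuot

variable {S A M : Type*} [CommSemiring S] [Semiring A] [Algebra S A]
  [AddCommMonoid M] [Module S M] {r : A → A → Prop}

theorem Rel.linearMap_mul_mul_eq (f : A →ₗ[S] M)
    (hf : ∀ ⦃a b⦄, r a b → ∀ x y, f (x * a * y) = f (x * b * y))
    {a b : A} (h : Rel r a b) (x y : A) : f (x * a * y) = f (x * b * y) := by
  induction h generalizing x y with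
  | of h => exact hf h x y
  | add_left _ ih => simp only [mul_add, add_mul, map_add, ih]
  | mul_left _ ih => simpa only [mul_assoc] using ih x (_ * y)
  | mul_right _ ih => simpa only [mul_assoc] using ih (x * _) y

variable (S) in
def liftLinearMap (f : A →ₗ[S] M)
    (hf : ∀ ⦃a b⦄, r a b → ∀ x y, f (x * a * y) = f (x * b * y)) :
    RingQuot r →ₗ[S] M where
  toFun x := Quot.lift f
    (fun a b h => by simpa only [one_mul, mul_one] using h.linearMap_mul_mul_eq f hf 1 1) x.toQuot
  map_add' := by
    rintro ⟨⟨x⟩⟩ ⟨⟨y⟩⟩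
    rw [add_quot]
    exact map_add f x y
  map_smul' := by
    rintro c ⟨⟨x⟩⟩
    rw [smul_quot]
    exact map_smul f c x

theorem liftLinearMap_mkAlgHom (f : A →ₗ[S] M)
    (hf : ∀ ⦃a b⦄, r a b → ∀ x y, f (x * a * y) = f (x * b * y)) (a : A) :
    liftLinearMap S f hf (mkAlgHom S r a) = f a := by
  rw [← AlgHom.coe_toRingHom, mkAlgHom_coe, mkRingHom_def]
  rfl

end RingQuot

theorem LinearIndependent.of_triangular {ι K M κ : Type*} [Field K] [AddCommGroup M]
    [Module K M] [LinearOrder κ] {v : ι → M} (φ : ι → M →ₗ[K] K) (f : ι → κ)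
    (hdiag : ∀ i, φ i (v i) ≠ 0) (hoff : ∀ i j, i ≠ j → f j ≤ f i → φ i (v j) = 0) :
    LinearIndependent K v := by
  classical
  rw [linearIndependent_iff']
  by_contra! ⟨s, g, hsum, i₀, hi₀s, hi₀⟩
  obtain ⟨i, hi, hmax⟩ :=
    (s.filter (g · ≠ 0)).exists_max_image f ⟨i₀, Finset.mem_filter.mpr ⟨hi₀s, hi₀⟩⟩
  rw [Finset.mem_filter] at hi
  have hφ := congr_arg (φ i) hsum
  rw [map_sum, map_zero, Finset.sum_eq_single i] at hφ
  · simp [hi.2, hdiag i] at hφ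
  · intro j hj hji
    by_cases hgj : g j = 0
    · simp [hgj]
    · simp [hoff i j (Ne.symm hji) (hmax j (by simp [hj, hgj]))]
  · exact fun h => absurd hi.1 h

section Words

variable (w : ℕ → α)

def window (i n : ℕ) : List α := (List.range n).map fun k => w (i + k)

@[simp] theorem length_window (i n : ℕ) : (window w i n).length = n := by simp [window]

theorem factorAt_iff_eq_window {i : ℕ} {u : List α} :
    FactorAt w i u ↔ u = window w i u.length :=
  Iff.rfl

theorem factorAt_window (i n : ℕ) : FactorAt w i (window w i n) := by
  rw [factorAt_iff_eq_window, length_window]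

theorem window_mem_fac (i n : ℕ) : window w i n ∈ Fac w := ⟨i, factorAt_window w i n⟩

theorem window_add (i m n : ℕ) : window w i (m + n) = window w i m ++ window w (i + m) n := by
  simp [window, List.range_add, Nat.add_assoc, Function.comp_def]

theorem window_succ (i n : ℕ) : window w i (n + 1) = window w i n ++ [w (i + n)] := by
  rw [window_add]
  simp [window]

theorem window_succ' (i n : ℕ) : window w i (n + 1) = w i :: window w (i + 1) n := by
  rw [Nat.add_comm n, window_add]
  simp [window]

theorem FactorAt.infix {i : ℕ} {s u t : List α} (h : FactorAt w i (s ++ u ++ t)) :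
    FactorAt w (i + s.length) u := by
  rw [factorAt_iff_eq_window, List.length_append, List.length_append, window_add,
    window_add] at h
  exact (List.append_inj (List.append_inj h (by simp)).1 (by simp)).2

theorem Fac.infix {u v : List α} (huv : u <:+: v) (hv : v ∈ Fac w) : u ∈ Fac w := by
  obtain ⟨s, t, rfl⟩ := huv
  obtain ⟨i, hi⟩ := hv
  exact ⟨_, hi.infix w⟩

noncomputable def firstOcc (u : List α) : ℕ := sInf {i | FactorAt w i u}

theorem factorAt_firstOcc {u : List α} (hu : u ∈ Fac w) : FactorAt w (firstOcc w u) u :=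
  Nat.sInf_mem hu

theorem firstOcc_le {u : List α} {i : ℕ} (h : FactorAt w i u) : firstOcc w u ≤ i :=
  Nat.sInf_le h

theorem eq_window_of_firstOcc_eq {u : List α} {i : ℕ} (hu : u ∈ Fac w)
    (hi : firstOcc w u = i) : u = window w i u.length :=
  hi ▸ factorAt_firstOcc w hu

theorem window_pred_firstOcc {u : List α} (hu : u ∈ Fac w) (hu0 : firstOcc w u ≠ 0) :
    window w (firstOcc w u - 1) (u.length + 1) = w (firstOcc w u - 1) :: u := by
  obtain ⟨k, hk⟩ := Nat.exists_eq_succ_of_ne_zero hu0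
  rw [hk, Nat.succ_sub_one, window_succ', ← eq_window_of_firstOcc_eq w hu hk]

theorem facCls_mul (a b : List α) : facCls w a * facCls w b = facCls w (a ++ b) := by
  rw [facCls, facCls, facCls, ← map_mul, ← map_mul, ← FreeMonoid.ofList_append]

noncomputable def freeWordFunctional (g : List α → ℚ) :
    MonoidAlgebra ℚ (FreeMonoid α) →ₗ[ℚ] ℚ :=
  (MonoidAlgebra.basis (FreeMonoid α) ℚ).constr ℚ fun m => (Fac w).indicator g m.toList

theorem freeWordFunctional_of (g : List α → ℚ) (m : FreeMonoid α) :
    freeWordFunctional w g (MonoidAlgebra.of ℚ _ m) = (Fac w).indicator g m.toList :=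
  (MonoidAlgebra.basis _ ℚ).constr_basis ℚ _ _

theorem freeWordFunctional_mul_of_mul (g : List α → ℚ) {u : FreeMonoid α}
    (hu : u.toList ∉ Fac w) (x y : MonoidAlgebra ℚ (FreeMonoid α)) :
    freeWordFunctional w g (x * MonoidAlgebra.of ℚ _ u * y) = 0 := by
  induction x using MonoidAlgebra.induction_on with
  | of p =>
    induction y using MonoidAlgebra.induction_on with
    | of q =>
      rw [← map_mul, ← map_mul, freeWordFunctional_of]
      refine Set.indicator_of_notMem (fun h => hu (Fac.infix w ?_ h)) _
      simp only [FreeMonoid.toList_mul, List.infix_append]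
    | add y z hy hz => rw [mul_add, map_add, hy, hz, add_zero]
    | smul c y hy => rw [mul_smul_comm, map_smul, hy, smul_zero]
  | add x z hx hz => rw [add_mul, add_mul, map_add, hx, hz, add_zero]
  | smul c x hx => rw [smul_mul_assoc, smul_mul_assoc, map_smul, hx, smul_zero]

noncomputable def wordFunctional (g : List α → ℚ) : FacAlg w →ₗ[ℚ] ℚ :=
  RingQuot.liftLinearMap ℚ (freeWordFunctional w g) (by
    rintro _ _ ⟨u, hu, rfl, rfl⟩ x y
    rw [mul_zero, zero_mul, map_zero]
    exact freeWordFunctional_mul_of_mul w g hu x y)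

theorem wordFunctional_facCls (g : List α → ℚ) (u : List α) :
    wordFunctional w g (facCls w u) = (Fac w).indicator g u := by
  rw [wordFunctional, facCls, RingQuot.liftLinearMap_mkAlgHom, freeWordFunctional_of,
    FreeMonoid.toList_ofList]

noncomputable def tailFunctional (v : List α) : FacAlg w →ₗ[ℚ] ℚ :=
  wordFunctional w ((Set.range (· :: v)).indicator 1)

theorem tailFunctional_facCls_cons_self {a : α} {u : List α} (h : a :: u ∈ Fac w) :
    tailFunctional w u (facCls w (a :: u)) = 1 := by
  rw [tailFunctional, wordFunctional_facCls, Set.indicator_of_mem h,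
    Set.indicator_of_mem (Set.mem_range_self a), Pi.one_apply]

theorem tailFunctional_facCls_cons_of_ne (a : α) {u v : List α} (huv : u ≠ v) :
    tailFunctional w v (facCls w (a :: u)) = 0 := by
  rw [tailFunctional, wordFunctional_facCls, Set.indicator_apply_eq_zero]
  refine fun _ => Set.indicator_of_notMem ?_ _
  rintro ⟨b, hb⟩
  exact huv (List.cons.inj hb).2.symm

noncomputable def windowCommutator (k n : ℕ) : FacAlg w :=
  ⁅facCls w (window w k n), facCls w [w (k + n)]⁆

theorem windowCommutator_mem_Wspace (k n : ℕ) : windowCommutator w k n ∈ Wspace w (n + 1) := by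
  refine Submodule.subset_span ⟨_, window_mem_fac w k n, _, ?_, by simp, Ring.lie_def _ _⟩
  simpa [window] using window_mem_fac w (k + n) 1

theorem tailFunctional_windowCommutator {v : List α} {k : ℕ} (hk : k < firstOcc w v) (n : ℕ) :
    tailFunctional w v (windowCommutator w k n) =
      tailFunctional w v (facCls w (window w k (n + 1))) := by
  have hprefix : window w k n ≠ v := fun h =>
    hk.not_ge (h ▸ firstOcc_le w (factorAt_window w k n))
  rw [windowCommutator, Ring.lie_def, map_sub, facCls_mul, facCls_mul, ← window_succ,
    List.singleton_append, tailFunctional_facCls_cons_of_ne w _ hprefix, sub_zero]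

theorem linearIndependent_windowCommutator {n : ℕ} {s : Set (List α)}
    (hs : ∀ u ∈ s, u ∈ Fac w ∧ u.length = n ∧ firstOcc w u ≠ 0) :
    LinearIndependent ℚ fun u : s => windowCommutator w (firstOcc w u - 1) n := by
  have key : ∀ u v : s, firstOcc w u ≤ firstOcc w v →
      tailFunctional w v (windowCommutator w (firstOcc w u - 1) n) =
        tailFunctional w v (facCls w (w (firstOcc w u - 1) :: u)) := by
    intro u v hle
    obtain ⟨hu, rfl, hu0⟩ := hs u u.2
    rw [tailFunctional_windowCommutator w (by omega), window_pred_firstOcc w hu hu0]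
  refine .of_triangular (fun v : s => tailFunctional w v) (fun u : s => firstOcc w u)
    (fun u => ?_) (fun v u hvu hle => ?_)
  · obtain ⟨hu, rfl, hu0⟩ := hs u u.2
    rw [key u u le_rfl, tailFunctional_facCls_cons_self w
      (window_pred_firstOcc w hu hu0 ▸ window_mem_fac w _ _)]
    exact one_ne_zero
  · rw [key u v hle, tailFunctional_facCls_cons_of_ne w _ (Subtype.coe_injective.ne hvu.symm)]

noncomputable def factorsOfLength [Finite α] (n : ℕ) : Finset (List α) :=
  ((List.finite_length_eq α n).inter_of_right (Fac w)).toFinset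

theorem mem_factorsOfLength [Finite α] {n : ℕ} {u : List α} :
    u ∈ factorsOfLength w n ↔ u ∈ Fac w ∧ u.length = n := by
  simp [factorsOfLength]

theorem finrank_Vspace_le [Finite α] (n : ℕ) :
    Module.finrank ℚ (Vspace w n) ≤ (factorsOfLength w n).card := by
  have hgen : {x | ∃ u ∈ Fac w, u.length = n ∧ x = facCls w u} =
      Set.range fun u : factorsOfLength w n => facCls w u := by
    ext x
    simp [mem_factorsOfLength, eq_comm, and_assoc]
  rw [Vspace, hgen]
  exact (finrank_range_le_card _).trans_eq (Fintype.card_coe _)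

instance Wspace.finite [Finite α] (n : ℕ) : Module.Finite ℚ (Wspace w n) := by
  refine Module.Finite.iff_fg.mpr (Submodule.fg_span (Set.Finite.subset
    ((List.finite_length_le α n).image2
      (fun a b => facCls w a * facCls w b - facCls w b * facCls w a)
      (List.finite_length_le α n)) ?_))
  rintro x ⟨a, -, b, -, hab, rfl⟩
  exact Set.mem_image2_of_mem (show a.length ≤ n by omega) (show b.length ≤ n by omega)

theorem card_erase_window_le_finrank_Wspace [Finite α] [DecidableEq α] (n : ℕ) :
    ((factorsOfLength w n).erase (window w 0 n)).card ≤
      Module.finrank ℚ (Wspace w (n + 1)) := by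
  set s := (factorsOfLength w n).erase (window w 0 n)
  have hs : ∀ u ∈ (s : Set (List α)), u ∈ Fac w ∧ u.length = n ∧ firstOcc w u ≠ 0 := by
    intro u hu
    rw [Finset.mem_coe, Finset.mem_erase, mem_factorsOfLength] at hu
    obtain ⟨hne, hfac, hlen⟩ := hu
    exact ⟨hfac, hlen, fun h0 => hne (hlen ▸ eq_window_of_firstOcc_eq w hfac h0)⟩
  calc s.card = Module.finrank ℚ (Submodule.span ℚ (Set.range
        fun u : (s : Set (List α)) => windowCommutator w (firstOcc w u - 1) n)) := by
        rw [finrank_span_eq_card (linearIndependent_windowCommutator w hs)]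
        simp
    _ ≤ Module.finrank ℚ (Wspace w (n + 1)) := by
      refine Submodule.finrank_mono (Submodule.span_le.mpr ?_)
      rintro _ ⟨u, rfl⟩
      exact windowCommutator_mem_Wspace w _ n

end Words

theorem dim_W_succ_ge [Fintype α] (w : ℕ → α) (n : ℕ) :
    Module.finrank ℚ (Vspace w n) - 1 ≤ Module.finrank ℚ (Wspace w (n + 1)) := by
  classical
  calc Module.finrank ℚ (Vspace w n) - 1 ≤ (factorsOfLength w n).card - 1 :=
        Nat.sub_le_sub_right (finrank_Vspace_le w n) 1
    _ = ((factorsOfLength w n).erase (window w 0 n)).card :=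
        (Finset.card_erase_of_mem ((mem_factorsOfLength w).mpr
          ⟨window_mem_fac w 0 n, length_window w 0 n⟩)).symm
    _ ≤ Module.finrank ℚ (Wspace w (n + 1)) := card_erase_window_le_finrank_Wspace w n
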